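/- Let G be a graph with m edges, minimum degree δ > 0, and largest normalized Laplacian eigenvalue μ. Then α(G) ≤ 2m(μ − 1)/(μδ). -/

import Mathlib

/-!
Let `S` be a maximum independent set, `s = ∑_{v ∈ S} d_v ≥ α δ` and `D = ∑_v d_v = 2m`.
Conjugating `ℒ` by the diagonal matrix of the `√d_v` gives the combinatorial Laplacian `Deg - A`,
so the Rayleigh quotient of `ℒ` at `x_v = √d_v y_v` is `yᵀ (Deg - A) y / ∑_v d_v y_v²`.
For `y = D • 1_S - s` the numerator is `D² s` (no edge lies inside `S`, and constants lie in the
kernel) and the denominator is `D s (D - s)`, so `μ ≥ D / (D - s)`, i.e. `μ s ≤ D (μ - 1)`.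
-/

open scoped Classical
open Matrix Finset

/-- The independence number of a finite simple graph. -/
noncomputable def indepNum {V : Type*} [Fintype V] (G : SimpleGraph V) : ℕ :=
  sSup {k | ∃ S : Finset V, (∀ u ∈ S, ∀ v ∈ S, u ≠ v → ¬ G.Adj u v) ∧ S.card = k}

theorem Matrix.IsHermitian.dotProduct_mulVec_le_mul {ι : Type*} [Fintype ι] [DecidableEq ι]
    {M : Matrix ι ι ℝ} (hM : M.IsHermitian) {μ : ℝ}
    (hμ : ∀ (ν : ℝ) (v : ι → ℝ), v ≠ 0 → M *ᵥ v = ν • v → ν ≤ μ) (x : ι → ℝ) :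
    x ⬝ᵥ M *ᵥ x ≤ μ * (x ⬝ᵥ x) := by
  have hN : (μ • 1 - M).IsHermitian := (isHermitian_one.smul (IsSelfAdjoint.all μ)).sub hM
  -- the eigenvalues of `μ • 1 - M` are `μ` minus eigenvalues of `M`
  have hpsd : (μ • 1 - M).PosSemidef := by
    rw [hN.posSemidef_iff_eigenvalues_nonneg]
    intro j
    have hu := hN.mulVec_eigenvectorBasis j
    rw [sub_mulVec, smul_mulVec, one_mulVec] at hu
    have hne : ⇑(hN.eigenvectorBasis j) ≠ 0 := by
      simpa using hN.eigenvectorBasis.orthonormal.ne_zero j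
    have := hμ (μ - hN.eigenvalues j) _ hne (by rw [sub_smul, ← hu]; abel)
    simp only [Pi.zero_apply]
    linarith
  have := hpsd.dotProduct_mulVec_nonneg x
  rw [sub_mulVec, smul_mulVec, one_mulVec, dotProduct_sub, dotProduct_smul] at this
  simp only [star_trivial, smul_eq_mul] at this
  linarith

lemma sum_mul_sq_indicator_sub_sum {V : Type*} [Fintype V] [DecidableEq V] (w : V → ℝ)
    (S : Finset V) :
    ∑ v, w v * ((∑ u, w u) * (if v ∈ S then 1 else 0) - ∑ u ∈ S, w u) ^ 2
      = (∑ u, w u) * (∑ u ∈ S, w u) * (∑ u, w u - ∑ u ∈ S, w u) := by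
  set D := ∑ u, w u
  set s := ∑ u ∈ S, w u
  have hterm : ∀ v, w v * (D * (if v ∈ S then 1 else 0) - s) ^ 2
      = (D ^ 2 - 2 * D * s) * (if v ∈ S then w v else 0) + s ^ 2 * w v := by
    intro v; split_ifs <;> ring
  simp_rw [hterm, sum_add_distrib, ← mul_sum, sum_ite_mem, univ_inter]
  ring

namespace SimpleGraph

variable {V : Type*} [Fintype V] [DecidableEq V] (G : SimpleGraph V) [DecidableRel G.Adj]

noncomputable def normLapMatrix : Matrix V V ℝ :=
  Matrix.of fun i j =>
    if i = j then 1
    else if G.Adj i j then -(1 / Real.sqrt ((G.degree i : ℝ) * (G.degree j : ℝ)))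
    else 0

theorem isHermitian_normLapMatrix : G.normLapMatrix.IsHermitian := by
  ext i j
  simp only [normLapMatrix, conjTranspose_apply, of_apply, star_trivial, eq_comm (a := j),
    G.adj_comm j i, mul_comm (G.degree j : ℝ)]

theorem diagonal_mul_normLapMatrix_mul_diagonal (hdeg : ∀ v, 0 < G.degree v) :
    diagonal (fun v => √(G.degree v : ℝ)) * G.normLapMatrix * diagonal (fun v => √(G.degree v : ℝ))
      = G.lapMatrix ℝ := by
  ext i j
  have hd : ∀ v, (0 : ℝ) < G.degree v := fun v => mod_cast hdeg v
  rw [mul_diagonal, diagonal_mul, lapMatrix, Matrix.sub_apply, degMatrix, diagonal_apply,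
    adjMatrix_apply, normLapMatrix, of_apply]
  by_cases hij : i = j
  · subst hij
    simp [Real.mul_self_sqrt (hd i).le]
  · by_cases hadj : G.Adj i j
    · have hi := (Real.sqrt_pos.2 (hd i)).ne'
      have hj := (Real.sqrt_pos.2 (hd j)).ne'
      rw [if_neg hij, if_pos hadj, if_neg hij, if_pos hadj, Real.sqrt_mul (hd i).le]
      field_simp
      ring
    · simp [hij, hadj]

theorem dotProduct_normLapMatrix_mulVec (hdeg : ∀ v, 0 < G.degree v) (y : V → ℝ) :
    (fun v => √(G.degree v : ℝ) * y v) ⬝ᵥ G.normLapMatrix *ᵥ (fun v => √(G.degree v : ℝ) * y v)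
      = y ⬝ᵥ G.lapMatrix ℝ *ᵥ y := by
  rw [← G.diagonal_mul_normLapMatrix_mul_diagonal hdeg, ← mulVec_mulVec, ← mulVec_mulVec]
  have hvec : y ᵥ* diagonal (fun v => √(G.degree v : ℝ)) = fun v => √(G.degree v : ℝ) * y v :=
    funext fun v => (vecMul_diagonal _ _ v).trans (mul_comm _ _)
  rw [dotProduct_mulVec y, hvec, funext (mulVec_diagonal _ y)]

theorem dotProduct_lapMatrix_mulVec_sub_const (x : V → ℝ) (c : ℝ) :
    (x - fun _ => c) ⬝ᵥ G.lapMatrix ℝ *ᵥ (x - fun _ => c) = x ⬝ᵥ G.lapMatrix ℝ *ᵥ x := by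
  have h := G.lapMatrix_toLinearMap₂' ℝ
  simp only [toLinearMap₂'_apply'] at h
  simp only [h, Pi.sub_apply, sub_sub_sub_cancel_right]

theorem dotProduct_lapMatrix_mulVec_indicator {S : Finset V} (hS : G.IsIndepSet S) :
    (fun v => if v ∈ S then (1 : ℝ) else 0) ⬝ᵥ G.lapMatrix ℝ *ᵥ (fun v => if v ∈ S then 1 else 0)
      = ∑ v ∈ S, (G.degree v : ℝ) := by
  have hadj : ∀ i j, (if G.Adj i j then (if i ∈ S then (1 : ℝ) else 0) * (if j ∈ S then 1 else 0)
      else 0) = 0 := by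
    intro i j
    split_ifs with hadj hi hj <;> simp
    exact hS hi hj hadj.ne hadj
  rw [lapMatrix, sub_mulVec, dotProduct_sub, dotProduct_mulVec_degMatrix,
    dotProduct_mulVec_adjMatrix]
  simp only [hadj, sum_const_zero, sub_zero]
  simp

theorem sum_degree_le_mul_sub_sum_degree_of_isIndepSet (hdeg : ∀ v, 0 < G.degree v) {μ : ℝ}
    (hμ : ∀ (ν : ℝ) (v : V → ℝ), v ≠ 0 → G.normLapMatrix *ᵥ v = ν • v → ν ≤ μ)
    {S : Finset V} (hS : G.IsIndepSet S) (hSne : S.Nonempty) :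
    ∑ v, (G.degree v : ℝ) ≤ μ * (∑ v, (G.degree v : ℝ) - ∑ v ∈ S, (G.degree v : ℝ)) := by
  set d : V → ℝ := fun v => G.degree v
  set D := ∑ v, d v
  set s := ∑ v ∈ S, d v
  set e : V → ℝ := fun v => if v ∈ S then 1 else 0
  have hd : ∀ v, 0 < d v := fun v => Nat.cast_pos.2 (hdeg v)
  have hs : 0 < s := sum_pos (fun v _ => hd v) hSne
  have hsD : s ≤ D := sum_le_univ_sum_of_nonneg fun v => (hd v).le
  -- `1_S` minus its `d`-weighted mean, scaled by `D`
  set y : V → ℝ := D • e - fun _ => s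
  set x : V → ℝ := fun v => √(d v) * y v
  have hnum : x ⬝ᵥ G.normLapMatrix *ᵥ x = D ^ 2 * s := by
    rw [G.dotProduct_normLapMatrix_mulVec hdeg, G.dotProduct_lapMatrix_mulVec_sub_const,
      mulVec_smul, dotProduct_smul, smul_dotProduct, G.dotProduct_lapMatrix_mulVec_indicator hS]
    simp only [smul_eq_mul]
    ring
  have hden : x ⬝ᵥ x = D * s * (D - s) := by
    rw [← sum_mul_sq_indicator_sub_sum d S]
    refine sum_congr rfl fun v _ => ?_
    simp only [x, y, e, Pi.sub_apply, Pi.smul_apply, smul_eq_mul]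
    rw [mul_mul_mul_comm, Real.mul_self_sqrt (hd v).le, sq]
  have hray := G.isHermitian_normLapMatrix.dotProduct_mulVec_le_mul hμ x
  rw [hnum, hden] at hray
  have hDs : 0 < D * s := mul_pos (hs.trans_le hsD) hs
  refine le_of_mul_le_mul_left ?_ hDs
  calc D * s * D = D ^ 2 * s := by ring
    _ ≤ μ * (D * s * (D - s)) := hray
    _ = D * s * (μ * (D - s)) := by ring

end SimpleGraph

theorem indepNum_eq_simpleGraph_indepNum {V : Type*} [Fintype V] (G : SimpleGraph V) :
    indepNum G = G.indepNum := by
  simp only [indepNum, SimpleGraph.indepNum, SimpleGraph.isNIndepSet_iff, SimpleGraph.IsIndepSet,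
    Set.Pairwise, Finset.mem_coe]

theorem stmt13_general (n : ℕ) (G : SimpleGraph (Fin n)) (hδ : 0 < G.minDegree)
    (L : Matrix (Fin n) (Fin n) ℝ)
    (hLdef : L = Matrix.of fun i j =>
      if i = j then (1 : ℝ)
      else if G.Adj i j then -(1 / Real.sqrt ((G.degree i : ℝ) * (G.degree j : ℝ)))
      else 0)
    (μ : ℝ)
    (hμmax : ∀ (ν : ℝ) (v : Fin n → ℝ), v ≠ 0 → L.mulVec v = ν • v → ν ≤ μ) :
    (indepNum G : ℝ) ≤
      2 * (G.edgeFinset.card : ℝ) * (μ - 1) / (μ * (G.minDegree : ℝ)) := by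
  have hdeg : ∀ v, 0 < G.degree v := fun v => hδ.trans_le (G.minDegree_le_degree v)
  obtain ⟨v⟩ : Nonempty (Fin n) := by
    by_contra h
    rw [not_nonempty_iff] at h
    exact hδ.ne' G.minDegree_of_subsingleton
  obtain ⟨S, hS⟩ := G.exists_isNIndepSet_indepNum
  have hSne : S.Nonempty := by
    rw [← card_pos, hS.card_eq]
    refine SimpleGraph.IsIndepSet.card_le_indepNum (t := {v}) ?_
    rw [coe_singleton]
    exact Set.pairwise_singleton _ _
  rw [indepNum_eq_simpleGraph_indepNum, ← hS.card_eq]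
  subst hLdef
  have hcore := G.sum_degree_le_mul_sub_sum_degree_of_isIndepSet hdeg hμmax hS.isIndepSet hSne
  have hsum : ∑ v, (G.degree v : ℝ) = 2 * #G.edgeFinset := by
    exact_mod_cast G.sum_degrees_eq_twice_card_edges
  have hmin : (#S : ℝ) * G.minDegree ≤ ∑ v ∈ S, (G.degree v : ℝ) := by
    rw [← nsmul_eq_mul]
    exact card_nsmul_le_sum _ _ _ fun v _ => mod_cast G.minDegree_le_degree v
  have hsD : ∑ v ∈ S, (G.degree v : ℝ) ≤ ∑ v, (G.degree v : ℝ) :=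
    sum_le_univ_sum_of_nonneg fun v => by positivity
  have hD : 0 < ∑ v, (G.degree v : ℝ) := sum_pos (fun v _ => mod_cast hdeg v) ⟨v, mem_univ v⟩
  have hμ : 0 < μ := by nlinarith
  rw [← hsum, le_div_iff₀ (by positivity)]
  nlinarith [mul_le_mul_of_nonneg_left hmin hμ.le]

/-- Corollary 6.4 (Harant–Richter): for a graph with m edges, minimum degree δ > 0 and
largest normalized Laplacian eigenvalue μ, α(G) ≤ 2m(μ − 1)/(μδ). -/
theorem stmt13 (n : ℕ) (G : SimpleGraph (Fin n)) (hδ : 0 < G.minDegree)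
    (L : Matrix (Fin n) (Fin n) ℝ)
    (hLdef : L = Matrix.of fun i j =>
      if i = j then (1 : ℝ)
      else if G.Adj i j then -(1 / Real.sqrt ((G.degree i : ℝ) * (G.degree j : ℝ)))
      else 0)
    (μ : ℝ)
    (hμev : ∃ v : Fin n → ℝ, v ≠ 0 ∧ L.mulVec v = μ • v)
    (hμmax : ∀ (ν : ℝ) (v : Fin n → ℝ), v ≠ 0 → L.mulVec v = ν • v → ν ≤ μ) :
    (indepNum G : ℝ) ≤
      2 * (G.edgeFinset.card : ℝ) * (μ - 1) / (μ * (G.minDegree : ℝ)) :=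
  stmt13_general n G hδ L hLdef μ hμmax
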